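/- arXiv:1912.02563 — 4 statements merged into one kernel-verified Lean document; each statement's English description precedes it below -/
import Mathlib

section
/- For any pointed extended pseudometric space (X, d, x₀) and any p ∈ [1, ∞], the p-Wasserstein distance W_p[d, x₀] is an extended pseudometric on the monoid D(X, x₀) of persistence diagrams: it is nonnegative, vanishes on diagonal pairs, is symmetric, and satisfies the triangle inequality. -/
open scoped ENNReal BigOperators
noncomputable section

/-- An extended pseudometric. -/
structure IsEPMetric {X : Type*} (d : X → X → ℝ≥0∞) : Prop where
  refl : ∀ x, d x x = 0
  symm : ∀ x y, d x y = d y x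
  triangle : ∀ x y z, d x z ≤ d x y + d y z

/-- The ℓ^p norm of a finite tuple of extended nonnegative reals. -/
def lpNorm (p : ℝ≥0∞) {n : ℕ} (v : Fin n → ℝ≥0∞) : ℝ≥0∞ :=
  if p = ∞ then ⨆ i, v i else (∑ i, v i ^ p.toReal) ^ (1 / p.toReal)

variable {X : Type*}

/-- The congruence on the free commutative monoid (multisets) identifying
formal sums that differ by copies of the basepoint. -/
def diagCon (x₀ : X) : AddCon (Multiset X) where
  r s t := ∃ a b : ℕ, s + Multiset.replicate a x₀ = t + Multiset.replicate b x₀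
  iseqv := by
    constructor
    · exact fun s => ⟨0, 0, rfl⟩
    · rintro s t ⟨a, b, h⟩; exact ⟨b, a, h.symm⟩
    · rintro s t u ⟨a, b, h₁⟩ ⟨a', b', h₂⟩
      refine ⟨a + a', b' + b, ?_⟩
      have h3 : s + Multiset.replicate a x₀ + Multiset.replicate a' x₀
          = u + Multiset.replicate b' x₀ + Multiset.replicate b x₀ := by
        rw [h₁, add_right_comm, h₂, add_right_comm]
      simpa [Multiset.replicate_add, add_assoc] using h3
  add' := by
    rintro s t s' t' ⟨a, b, h₁⟩ ⟨a', b', h₂⟩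
    refine ⟨a + a', b + b', ?_⟩
    have h3 : (s + Multiset.replicate a x₀) + (s' + Multiset.replicate a' x₀)
        = (t + Multiset.replicate b x₀) + (t' + Multiset.replicate b' x₀) := by rw [h₁, h₂]
    calc s + s' + Multiset.replicate (a + a') x₀
        = (s + Multiset.replicate a x₀) + (s' + Multiset.replicate a' x₀) := by
          rw [Multiset.replicate_add]; exact add_add_add_comm s s' _ _
      _ = (t + Multiset.replicate b x₀) + (t' + Multiset.replicate b' x₀) := h3
      _ = t + t' + Multiset.replicate (b + b') x₀ := by
          rw [Multiset.replicate_add]; exact (add_add_add_comm t t' _ _).symm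

/-- The monoid of persistence diagrams on a pointed set. -/
abbrev Diagram (X : Type*) (x₀ : X) := (diagCon x₀).Quotient

/-- The canonical map `X → D(X,x₀)`. -/
def diagι (x₀ : X) (x : X) : Diagram X x₀ := (diagCon x₀).mk' {x}

/-- Pad a tuple to length `r` with copies of the basepoint. -/
def padTo (x₀ : X) {n : ℕ} (x : Fin n → X) (r : ℕ) : Fin r → X :=
  fun k => if h : (k : ℕ) < n then x ⟨k, h⟩ else x₀

/-- The minimal ℓ^p matching cost between two tuples of equal length. -/
def matchCost (d : X → X → ℝ≥0∞) (p : ℝ≥0∞) {r : ℕ} (x y : Fin r → X) : ℝ≥0∞ :=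
  ⨅ σ : Equiv.Perm (Fin r), lpNorm p (fun k => d (x k) (y (σ k)))

/-- A tuple enumerating a multiset. -/
def mFun (s : Multiset X) : Fin s.toList.length → X := fun k => s.toList.get k

/-- The p-Wasserstein cost between two multisets, padding both to the combined length. -/
def WpM (d : X → X → ℝ≥0∞) (x₀ : X) (p : ℝ≥0∞) (s t : Multiset X) : ℝ≥0∞ :=
  matchCost d p (padTo x₀ (mFun s) (Multiset.card s + Multiset.card t))
                (padTo x₀ (mFun t) (Multiset.card s + Multiset.card t))

/-- The p-Wasserstein distance on the monoid of persistence diagrams. -/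
def Wp (d : X → X → ℝ≥0∞) (x₀ : X) (p : ℝ≥0∞) (α β : Diagram X x₀) : ℝ≥0∞ :=
  ⨅ (s : Multiset X) (t : Multiset X) (_ : (diagCon x₀).mk' s = α)
    (_ : (diagCon x₀).mk' t = β), WpM d x₀ p s t

/-- The Lipschitz norm of a map between extended pseudometric spaces. -/
def eLipNorm {Y : Type*} (d : X → X → ℝ≥0∞) (ρ : Y → Y → ℝ≥0∞) (f : X → Y) : ℝ≥0∞ :=
  sInf {C : ℝ≥0∞ | ∀ x y, ρ (f x) (f y) ≤ C * d x y}


/-! Padding representatives of two diagrams with the basepoint to a common length `R` gives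
tuples whose multisets of entries depend only on the diagrams (once `R` is large), and the
optimal matching cost of two tuples only depends on these multisets. Padding further never
increases the cost since `d x₀ x₀ = 0`. So for `R` large the triangle inequality for `W_p`
reduces to the one for matchings of three tuples of length `R`, which follows by composing
permutations and Minkowski's inequality. -/

theorem Fintype.exists_perm_comp_eq_of_map_univ_eq {ι α : Type*} [Fintype ι] {f g : ι → α}
    (h : Finset.univ.val.map f = Finset.univ.val.map g) : ∃ σ : Equiv.Perm ι, g ∘ σ = f := by
  classical
  have hcard (c : α) : Fintype.card {i // f i = c} = Fintype.card {i // g i = c} := by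
    simpa only [Fintype.card_subtype, Multiset.count_map, eq_comm, Finset.card_def,
      Finset.filter_val] using congrArg (Multiset.count c) h
  exact ⟨Equiv.ofFiberEquiv fun c => Fintype.equivOfCardEq (hcard c),
    funext (Equiv.ofFiberEquiv_map _)⟩

section lpNorm

variable {p : ℝ≥0∞} {m n : ℕ}

lemma lpNorm_comp_perm (v : Fin n → ℝ≥0∞) (σ : Equiv.Perm (Fin n)) :
    lpNorm p (v ∘ σ) = lpNorm p v := by
  unfold lpNorm
  split
  · exact σ.iSup_comp
  · rw [Function.comp_def, Equiv.sum_comp σ (fun i => v i ^ p.toReal)]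

lemma lpNorm_comp_of_injective (hp : p ≠ 0) {e : Fin m → Fin n} (he : e.Injective)
    {v : Fin n → ℝ≥0∞} (hv : ∀ k ∉ Set.range e, v k = 0) : lpNorm p (v ∘ e) = lpNorm p v := by
  unfold lpNorm
  split
  · refine le_antisymm (iSup_comp_le v e) (iSup_le fun k => ?_)
    by_cases hk : k ∈ Set.range e
    · obtain ⟨i, rfl⟩ := hk
      exact le_iSup (v ∘ e) i
    · simp [hv k hk]
  · have hp' : 0 < p.toReal := ENNReal.toReal_pos hp ‹_›
    congr 1
    exact Fintype.sum_of_injective e he _ _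
      (fun k hk => by simp [hv k hk, ENNReal.zero_rpow_of_pos hp']) fun _ => rfl

lemma lpNorm_zero (hp : p ≠ 0) : lpNorm p (fun _ : Fin n => 0) = 0 := by
  unfold lpNorm
  split
  · simp
  · have hp' : 0 < p.toReal := ENNReal.toReal_pos hp ‹_›
    simp [ENNReal.zero_rpow_of_pos hp', hp']

lemma lpNorm_mono {v w : Fin n → ℝ≥0∞} (h : v ≤ w) : lpNorm p v ≤ lpNorm p w := by
  unfold lpNorm
  split
  · exact iSup_mono h
  · gcongr
    exact h _

lemma lpNorm_add_le (hp : 1 ≤ p) (v w : Fin n → ℝ≥0∞) :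
    lpNorm p (v + w) ≤ lpNorm p v + lpNorm p w := by
  unfold lpNorm
  split
  · exact iSup_le fun i => add_le_add (le_iSup v i) (le_iSup w i)
  · exact ENNReal.Lp_add_le Finset.univ v w (ENNReal.toReal_mono ‹_› hp)

end lpNorm

section matchCost

variable {d : X → X → ℝ≥0∞} {p : ℝ≥0∞} {r : ℕ}

lemma matchCost_comp_perm (x y : Fin r → X) (σ τ : Equiv.Perm (Fin r)) :
    matchCost d p (x ∘ σ) (y ∘ τ) = matchCost d p x y := by
  have (π : Equiv.Perm (Fin r)) : lpNorm p (fun k => d ((x ∘ σ) k) ((y ∘ τ) (π k)))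
      = lpNorm p (fun k => d (x k) (y ((τ * π * σ⁻¹) k))) := by
    rw [← lpNorm_comp_perm (fun k => d (x k) (y ((τ * π * σ⁻¹) k))) σ]
    simp [Function.comp_def]
  simp only [matchCost, this]
  exact ((Equiv.mulLeft τ).trans (Equiv.mulRight σ⁻¹)).iInf_comp
    (g := fun π => lpNorm p fun k => d (x k) (y (π k)))

lemma matchCost_comm (hd : ∀ x y, d x y = d y x) (x y : Fin r → X) :
    matchCost d p x y = matchCost d p y x := by
  have (π : Equiv.Perm (Fin r)) : lpNorm p (fun k => d (x k) (y (π k)))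
      = lpNorm p (fun k => d (y k) (x (π⁻¹ k))) := by
    rw [← lpNorm_comp_perm (fun k => d (y k) (x (π⁻¹ k))) π]
    simp [Function.comp_def, hd]
  simp only [matchCost, this]
  exact (Equiv.inv (Equiv.Perm (Fin r))).iInf_comp
    (g := fun π => lpNorm p fun k => d (y k) (x (π k)))

lemma matchCost_congr {x x' y y' : Fin r → X}
    (hx : Finset.univ.val.map x = Finset.univ.val.map x')
    (hy : Finset.univ.val.map y = Finset.univ.val.map y') :
    matchCost d p x y = matchCost d p x' y' := by
  obtain ⟨σ, rfl⟩ := Fintype.exists_perm_comp_eq_of_map_univ_eq hx.symm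
  obtain ⟨τ, rfl⟩ := Fintype.exists_perm_comp_eq_of_map_univ_eq hy.symm
  exact (matchCost_comp_perm x y σ τ).symm

lemma matchCost_self (hd : ∀ x, d x x = 0) (hp : p ≠ 0) (x : Fin r → X) :
    matchCost d p x x = 0 :=
  nonpos_iff_eq_zero.mp <| (iInf_le _ 1).trans_eq <| by simpa [hd] using lpNorm_zero hp

lemma matchCost_triangle (hd : ∀ x y z, d x z ≤ d x y + d y z) (hp : 1 ≤ p)
    (x y z : Fin r → X) : matchCost d p x z ≤ matchCost d p x y + matchCost d p y z :=
  ENNReal.le_iInf_add_iInf fun σ τ => iInf_le_of_le (τ * σ) <| calc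
    lpNorm p (fun k => d (x k) (z ((τ * σ) k)))
      ≤ lpNorm p ((fun k => d (x k) (y (σ k))) + (fun k => d (y k) (z (τ k))) ∘ σ) :=
        lpNorm_mono fun k => hd _ _ _
    _ ≤ _ := lpNorm_add_le hp _ _
    _ = _ := by rw [lpNorm_comp_perm]

lemma matchCost_padTo_le (x₀ : X) (hd : d x₀ x₀ = 0) (hp : p ≠ 0) {R : ℕ} (h : r ≤ R)
    (x y : Fin r → X) : matchCost d p (padTo x₀ x R) (padTo x₀ y R) ≤ matchCost d p x y := by
  refine le_iInf fun σ => iInf_le_of_le (σ.viaFintypeEmbedding (Fin.castLEEmb h)) ?_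
  have hτ (i : Fin r) : σ.viaFintypeEmbedding (Fin.castLEEmb h) (Fin.castLE h i)
      = Fin.castLE h (σ i) := σ.viaFintypeEmbedding_apply_image (Fin.castLEEmb h) i
  have hpad (z : Fin r → X) (i : Fin r) : padTo x₀ z R (Fin.castLE h i) = z i := by
    simp [padTo]
  rw [← lpNorm_comp_of_injective hp (Fin.castLE_injective h)]
  · simp only [Function.comp_def, hτ, hpad, le_refl]
  · intro k hk
    have hrk : r ≤ (k : ℕ) := by simpa [Fin.range_castLE] using hk
    rw [σ.viaFintypeEmbedding_apply_notMem_range (Fin.castLEEmb h) hk]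
    simp [padTo, hrk.not_gt, hd]

end matchCost

section Diagram

variable {x₀ : X}

lemma padTo_padTo {n r : ℕ} (h : n ≤ r) (x : Fin n → X) (R : ℕ) :
    padTo x₀ (padTo x₀ x r) R = padTo x₀ x R := by
  funext k
  unfold padTo
  split_ifs <;> first | rfl | omega

lemma map_univ_padTo_mFun (s : Multiset X) {R : ℕ} (h : Multiset.card s ≤ R) :
    Finset.univ.val.map (padTo x₀ (mFun s) R)
      = s + Multiset.replicate (R - Multiset.card s) x₀ := by
  have : List.ofFn (padTo x₀ (mFun s) R)
      = s.toList ++ List.replicate (R - Multiset.card s) x₀ := by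
    refine List.ext_getElem (by simp; omega) fun k hk _ => ?_
    simp only [List.getElem_ofFn, padTo, mFun, List.getElem_append, List.getElem_replicate]
    rfl
  rw [Fin.univ_val_map, this, ← Multiset.coe_add, Multiset.coe_toList, Multiset.coe_replicate]

lemma map_univ_padTo_mFun_eq_of_diagCon {s t : Multiset X} (hst : diagCon x₀ s t) {R : ℕ}
    (hs : Multiset.card s ≤ R) (ht : Multiset.card t ≤ R) :
    Finset.univ.val.map (padTo x₀ (mFun s) R) = Finset.univ.val.map (padTo x₀ (mFun t) R) := by
  obtain ⟨a, b, hab⟩ := hst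
  have hcard : Multiset.card s + a = Multiset.card t + b := by
    simpa using congrArg Multiset.card hab
  rw [map_univ_padTo_mFun s hs, map_univ_padTo_mFun t ht]
  refine add_right_cancel (b := Multiset.replicate a x₀) ?_
  calc s + Multiset.replicate (R - Multiset.card s) x₀ + Multiset.replicate a x₀
      = (s + Multiset.replicate a x₀) + Multiset.replicate (R - Multiset.card s) x₀ := by
        abel
    _ = t + Multiset.replicate (b + (R - Multiset.card s)) x₀ := by
        rw [hab, Multiset.replicate_add, add_assoc]
    _ = t + Multiset.replicate (R - Multiset.card t) x₀ + Multiset.replicate a x₀ := by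
        rw [add_assoc, ← Multiset.replicate_add]
        congr 2
        omega

variable {d : X → X → ℝ≥0∞} {p : ℝ≥0∞}

lemma WpM_comm (hd : ∀ x y, d x y = d y x) (s t : Multiset X) :
    WpM d x₀ p s t = WpM d x₀ p t s := by
  rw [WpM, WpM, matchCost_comm hd, Nat.add_comm (Multiset.card t)]

lemma Wp_mk_le_WpM (s t : Multiset X) :
    Wp d x₀ p ((diagCon x₀).mk' s) ((diagCon x₀).mk' t) ≤ WpM d x₀ p s t :=
  iInf_le_of_le s <| iInf_le_of_le t <| iInf_le_of_le rfl <| iInf_le _ rfl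

lemma Wp_comm (hd : ∀ x y, d x y = d y x) (α β : Diagram X x₀) :
    Wp d x₀ p α β = Wp d x₀ p β α := by
  unfold Wp
  rw [iInf_comm]
  simp only [WpM_comm hd]
  exact iInf_congr fun _ => iInf_congr fun _ => iInf_comm

lemma matchCost_padTo_le_WpM (hd : d x₀ x₀ = 0) (hp : p ≠ 0) {s t : Multiset X} {R : ℕ}
    (h : Multiset.card s + Multiset.card t ≤ R) :
    matchCost d p (padTo x₀ (mFun s) R) (padTo x₀ (mFun t) R) ≤ WpM d x₀ p s t := by
  have hs : s.toList.length ≤ Multiset.card s + Multiset.card t := by simp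
  have ht : t.toList.length ≤ Multiset.card s + Multiset.card t := by simp
  rw [← padTo_padTo hs (mFun s) R, ← padTo_padTo ht (mFun t) R]
  exact matchCost_padTo_le x₀ hd hp h _ _

lemma Wp_mk_le_matchCost (s t : Multiset X) {R : ℕ}
    (h : Multiset.card s + Multiset.card t ≤ R) :
    Wp d x₀ p ((diagCon x₀).mk' s) ((diagCon x₀).mk' t)
      ≤ matchCost d p (padTo x₀ (mFun s) R) (padTo x₀ (mFun t) R) := by
  set s' := s + Multiset.replicate (R - Multiset.card s - Multiset.card t) x₀
  have hs' : diagCon x₀ s' s := ⟨0, R - Multiset.card s - Multiset.card t, by simp [s']⟩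
  have hmk : (diagCon x₀).mk' s' = (diagCon x₀).mk' s := (AddCon.eq _).mpr hs'
  have hcard : Multiset.card s' + Multiset.card t = R := by
    simp only [s', Multiset.card_add, Multiset.card_replicate]
    omega
  calc Wp d x₀ p ((diagCon x₀).mk' s) ((diagCon x₀).mk' t)
      = Wp d x₀ p ((diagCon x₀).mk' s') ((diagCon x₀).mk' t) := by
        rw [hmk]
    _ ≤ WpM d x₀ p s' t := Wp_mk_le_WpM s' t
    _ = matchCost d p (padTo x₀ (mFun s) R) (padTo x₀ (mFun t) R) := by
        rw [WpM, hcard]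
        exact matchCost_congr (map_univ_padTo_mFun_eq_of_diagCon hs' (by omega) (by omega)) rfl

lemma Wp_mk_le_WpM_add_WpM (hd₀ : d x₀ x₀ = 0) (hd : ∀ x y z, d x z ≤ d x y + d y z)
    (hp : 1 ≤ p) {s t t' u : Multiset X} (ht : diagCon x₀ t t') :
    Wp d x₀ p ((diagCon x₀).mk' s) ((diagCon x₀).mk' u) ≤ WpM d x₀ p s t + WpM d x₀ p t' u := by
  have hp₀ : p ≠ 0 := (zero_lt_one.trans_le hp).ne'
  set R := Multiset.card s + Multiset.card t + Multiset.card t' + Multiset.card u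
  let pad (v : Multiset X) : Fin R → X := padTo x₀ (mFun v) R
  calc Wp d x₀ p ((diagCon x₀).mk' s) ((diagCon x₀).mk' u)
      ≤ matchCost d p (pad s) (pad u) := Wp_mk_le_matchCost s u (by omega)
    _ ≤ matchCost d p (pad s) (pad t) + matchCost d p (pad t) (pad u) :=
        matchCost_triangle hd hp _ _ _
    _ = matchCost d p (pad s) (pad t) + matchCost d p (pad t') (pad u) := by
        rw [matchCost_congr (map_univ_padTo_mFun_eq_of_diagCon ht (by omega) (by omega)) rfl]
    _ ≤ WpM d x₀ p s t + WpM d x₀ p t' u :=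
        add_le_add (matchCost_padTo_le_WpM hd₀ hp₀ (by omega))
          (matchCost_padTo_le_WpM hd₀ hp₀ (by omega))

end Diagram

/-- The p-Wasserstein distance is an extended pseudometric on the monoid of
persistence diagrams. -/
theorem wasserstein_is_epmetric (d : X → X → ℝ≥0∞) (hd : IsEPMetric d) (x₀ : X)
    (p : ℝ≥0∞) (hp : 1 ≤ p) :
    IsEPMetric (Wp d x₀ p) := by
  refine ⟨fun α => ?_, Wp_comm hd.symm, fun α β γ => ?_⟩
  · obtain ⟨s, rfl⟩ := AddCon.mk'_surjective α
    exact nonpos_iff_eq_zero.mp <| (Wp_mk_le_WpM s s).trans_eq <|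
      matchCost_self hd.refl (zero_lt_one.trans_le hp).ne' _
  · refine ENNReal.le_iInf_add_iInf fun s t' => ENNReal.le_iInf_add_iInf fun t u =>
      ENNReal.le_iInf_add_iInf fun hs ht' => ENNReal.le_iInf_add_iInf fun ht hu => ?_
    subst hs hu
    exact Wp_mk_le_WpM_add_WpM (hd.refl x₀) hd.triangle hp
      ((AddCon.eq _).mp (ht.trans ht'.symm))

end
end

section
/- For every pointed extended pseudometric space (X, d, x₀) and p ∈ [1, ∞], the canonical map i : X → D(X, x₀) is 1-Lipschitz with respect to d and W_p[d, x₀]; explicitly, W_p(i(x), i(x')) = min(d(x, x'), ‖(d(x, x₀), d(x', x₀))‖_p) ≤ d(x, x'). -/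
open scoped ENNReal BigOperators
noncomputable section

variable {X : Type*}

/-! The representatives `{x}` and `{x'}` of `i x` and `i x'` pad to the pairs `(x, x₀)` and
`(x', x₀)`; the identity matching costs `d x x'` and the swap costs `‖(d x x₀, d x' x₀)‖_p`,
which gives the upper bound. Conversely, every representative of `i x` consists of copies of `x`
and `x₀` and contains `x` unless `x = x₀`. So a matching of padded representatives either sends a
copy of `x` to a copy of `x'`, one coordinate of cost `d x x'`, or sends `x` and `x'` to `x₀` in two
distinct coordinates, whose costs alone have ℓ^p norm `‖(d x x₀, d x' x₀)‖_p`. -/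

section lpNorm

variable {p : ℝ≥0∞} {m n : ℕ}

lemma lpNorm_comp_le {e : Fin m → Fin n} (he : e.Injective) (v : Fin n → ℝ≥0∞) :
    lpNorm p (v ∘ e) ≤ lpNorm p v := by
  unfold lpNorm
  split_ifs
  · exact iSup_le fun k => le_iSup v (e k)
  · gcongr
    exact (Finset.sum_map Finset.univ ⟨e, he⟩ fun i => v i ^ p.toReal).symm.trans_le
      (Finset.sum_le_sum_of_subset (Finset.subset_univ _))

lemma lpNorm_comp_eq (hp : p ≠ 0) {e : Fin m → Fin n} (he : e.Injective) {v : Fin n → ℝ≥0∞}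
    (hv : ∀ i ∉ Set.range e, v i = 0) : lpNorm p (v ∘ e) = lpNorm p v := by
  refine (lpNorm_comp_le he v).antisymm ?_
  unfold lpNorm
  split_ifs with hp'
  · refine iSup_le fun i => ?_
    by_cases hi : i ∈ Set.range e
    · obtain ⟨k, rfl⟩ := hi
      exact le_iSup (v ∘ e) k
    · simp [hv i hi]
  · have hq : 0 < p.toReal := ENNReal.toReal_pos hp hp'
    refine le_of_eq (congrArg (· ^ (1 / p.toReal)) ?_)
    refine ((Finset.sum_map Finset.univ ⟨e, he⟩ fun i => v i ^ p.toReal).symm.trans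
      (Finset.sum_subset (Finset.subset_univ _) fun i _ hi => ?_)).symm
    rw [hv i (by simpa using hi), ENNReal.zero_rpow_of_pos hq]

lemma lpNorm_singleton (hp : p ≠ 0) (a : ℝ≥0∞) : lpNorm p ![a] = a := by
  unfold lpNorm
  split_ifs with hp'
  · simp
  · simp [ENNReal.toReal_ne_zero.2 ⟨hp, hp'⟩]

lemma le_lpNorm (hp : p ≠ 0) (v : Fin n → ℝ≥0∞) (i : Fin n) : v i ≤ lpNorm p v := by
  have h := lpNorm_comp_le (p := p) (Function.injective_of_subsingleton fun _ : Fin 1 => i) v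
  rwa [show v ∘ (fun _ : Fin 1 => i) = ![v i] by ext k; fin_cases k; rfl,
    lpNorm_singleton hp] at h

lemma lpNorm_pair_le {i j : Fin n} (hij : i ≠ j) (v : Fin n → ℝ≥0∞) :
    lpNorm p ![v i, v j] ≤ lpNorm p v := by
  have h := lpNorm_comp_le (p := p) (e := ![i, j])
    (Fin.cons_injective_iff.2 ⟨by simpa, Function.injective_of_subsingleton _⟩) v
  rwa [show v ∘ ![i, j] = ![v i, v j] by ext k; fin_cases k <;> rfl] at h

lemma lpNorm_pair_zero (hp : p ≠ 0) (a : ℝ≥0∞) : lpNorm p ![a, 0] = a := by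
  have h := lpNorm_comp_eq hp (Function.injective_of_subsingleton fun _ : Fin 1 => (0 : Fin 2))
    (v := ![a, 0]) (by simp [Fin.forall_fin_two])
  rwa [show ![a, 0] ∘ (fun _ : Fin 1 => (0 : Fin 2)) = ![a] by ext k; fin_cases k; rfl,
    lpNorm_singleton hp, eq_comm] at h

end lpNorm

section Wasserstein

variable {d : X → X → ℝ≥0∞} {p : ℝ≥0∞}

lemma matchCost_fin_two_le (a b a' b' : X) :
    matchCost d p ![a, b] ![a', b'] ≤
      min (lpNorm p ![d a a', d b b']) (lpNorm p ![d a b', d b a']) := by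
  refine le_min (iInf_le_of_le 1 (le_of_eq ?_)) (iInf_le_of_le (Equiv.swap 0 1) (le_of_eq ?_)) <;>
    congr 1 <;> ext k <;> fin_cases k <;> rfl

variable {x₀ : X}

lemma Wp_diagι_le_WpM (x x' : X) :
    Wp d x₀ p (diagι x₀ x) (diagι x₀ x') ≤ WpM d x₀ p {x} {x'} :=
  iInf_le_of_le {x} <| iInf_le_of_le {x'} <| iInf_le_of_le rfl <| iInf_le _ rfl

lemma WpM_singleton_singleton (x x' : X) :
    WpM d x₀ p {x} {x'} = matchCost d p ![x, x₀] ![x', x₀] := by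
  -- `card {x} + card {x'}` reduces to `2`
  show matchCost d p (padTo x₀ (mFun {x}) 2) (padTo x₀ (mFun {x'}) 2) = _
  congr 1 <;> ext k <;> fin_cases k <;> simp [padTo, mFun, Multiset.toList_singleton]

lemma insert_setOf_mem_eq_of_diagCon {s t : Multiset X} (h : diagCon x₀ s t) :
    insert x₀ {y | y ∈ s} = insert x₀ {y | y ∈ t} := by
  obtain ⟨a, b, hab⟩ := h
  ext y
  by_cases hy : y = x₀
  · simp [hy]
  · simpa [hy, Multiset.mem_replicate] using congrArg (y ∈ ·) hab

lemma insert_range_padTo {s : Multiset X} {r : ℕ} (hr : Multiset.card s ≤ r) :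
    insert x₀ (Set.range (padTo x₀ (mFun s) r)) = insert x₀ {y | y ∈ s} := by
  ext y
  simp only [Set.mem_insert_iff, Set.mem_range, Set.mem_ofPred_eq]
  constructor
  · rintro (rfl | ⟨k, rfl⟩)
    · exact .inl rfl
    · unfold padTo mFun
      split_ifs
      · exact .inr (Multiset.mem_toList.1 (List.get_mem _ _))
      · exact .inl rfl
  · rintro (rfl | hy)
    · exact .inl rfl
    obtain ⟨i, rfl⟩ := List.mem_iff_get.1 (Multiset.mem_toList.2 hy)
    have hi : (i : ℕ) < r := i.2.trans_le (by simpa using hr)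
    exact .inr ⟨⟨i, hi⟩, dif_pos i.2⟩

lemma insert_range_padTo_of_mk'_eq_diagι {s : Multiset X} {x : X}
    (hs : (diagCon x₀).mk' s = diagι x₀ x) {r : ℕ} (hr : Multiset.card s ≤ r) :
    insert x₀ (Set.range (padTo x₀ (mFun s) r)) = {x₀, x} := by
  rw [insert_range_padTo hr, insert_setOf_mem_eq_of_diagCon ((AddCon.eq _).1 hs)]
  simp

lemma min_le_lpNorm_matching (hd : IsEPMetric d) (hp : p ≠ 0) {x x' : X} {r : ℕ}
    {xs ys : Fin r → X} (hxs : insert x₀ (Set.range xs) = {x₀, x})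
    (hys : insert x₀ (Set.range ys) = {x₀, x'}) (σ : Equiv.Perm (Fin r)) :
    min (d x x') (lpNorm p ![d x x₀, d x' x₀]) ≤ lpNorm p (fun k => d (xs k) (ys (σ k))) := by
  set c := fun k => d (xs k) (ys (σ k))
  have hxs_val : ∀ k, xs k ≠ x → xs k = x₀ := fun k hk => by
    simpa [hk] using hxs.le (Set.mem_insert_of_mem _ ⟨k, rfl⟩)
  have hys_val : ∀ k, ys k ≠ x' → ys k = x₀ := fun k hk => by
    simpa [hk] using hys.le (Set.mem_insert_of_mem _ ⟨k, rfl⟩)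
  have hx_mem : x ≠ x₀ → ∃ i, xs i = x :=
    (hxs.ge (Set.mem_insert_of_mem _ rfl)).resolve_left
  have hx'_mem : x' ≠ x₀ → ∃ j, ys j = x' :=
    (hys.ge (Set.mem_insert_of_mem _ rfl)).resolve_left
  have matched : ∀ k, xs k = x → ys (σ k) = x' →
      min (d x x') (lpNorm p ![d x x₀, d x' x₀]) ≤ lpNorm p c := fun k hk hk' =>
    min_le_left _ _ |>.trans (by simpa [c, hk, hk'] using le_lpNorm hp c k)
  rcases eq_or_ne x x₀ with rfl | hx
  · rcases eq_or_ne x' x with rfl | hx'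
    · simp [hd.refl]
    obtain ⟨j, hj⟩ := hx'_mem hx'
    exact matched (σ.symm j) (not_not.1 fun h => h (hxs_val _ h)) (by simpa using hj)
  obtain ⟨i, hi⟩ := hx_mem hx
  by_cases hi' : ys (σ i) = x'
  · exact matched i hi hi'
  rcases eq_or_ne x' x₀ with rfl | hx'
  · exact absurd (hys_val _ hi') hi'
  obtain ⟨j, hj⟩ := hx'_mem hx'
  by_cases hj' : xs (σ.symm j) = x
  · exact matched _ hj' (by simpa using hj)
  -- `x` and `x'` are both matched to `x₀`, in the distinct coordinates `i` and `σ⁻¹ j`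
  have hij : i ≠ σ.symm j := fun h => hi' (by simpa [h] using hj)
  refine min_le_right _ _ |>.trans ?_
  simpa [c, hi, hys_val _ hi', hxs_val _ hj', hj, hd.symm x'] using lpNorm_pair_le hij c

lemma min_le_Wp_diagι (hd : IsEPMetric d) (hp : p ≠ 0) (x x' : X) :
    min (d x x') (lpNorm p ![d x x₀, d x' x₀]) ≤ Wp d x₀ p (diagι x₀ x) (diagι x₀ x') :=
  le_iInf₂ fun _ _ => le_iInf₂ fun hs ht => le_iInf fun σ =>
    min_le_lpNorm_matching hd hp (insert_range_padTo_of_mk'_eq_diagι hs (Nat.le_add_right _ _))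
      (insert_range_padTo_of_mk'_eq_diagι ht (Nat.le_add_left _ _)) σ

end Wasserstein

/-- The canonical map `i : X → D(X,x₀)` is 1-Lipschitz; explicitly,
`W_p(i x, i x') = min (d x x') ‖(d x x₀, d x' x₀)‖_p ≤ d x x'`. -/
theorem canonical_map_one_lipschitz (d : X → X → ℝ≥0∞) (hd : IsEPMetric d) (x₀ : X)
    (p : ℝ≥0∞) (hp : 1 ≤ p) (x x' : X) :
    Wp d x₀ p (diagι x₀ x) (diagι x₀ x')
        = min (d x x') (lpNorm p ![d x x₀, d x' x₀]) ∧
    Wp d x₀ p (diagι x₀ x) (diagι x₀ x') ≤ d x x' := by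
  have hp₀ : p ≠ 0 := (zero_lt_one.trans_le hp).ne'
  have hWp : Wp d x₀ p (diagι x₀ x) (diagι x₀ x')
      = min (d x x') (lpNorm p ![d x x₀, d x' x₀]) := by
    refine le_antisymm ?_ (min_le_Wp_diagι hd hp₀ x x')
    calc Wp d x₀ p (diagι x₀ x) (diagι x₀ x')
        ≤ matchCost d p ![x, x₀] ![x', x₀] :=
          (Wp_diagι_le_WpM x x').trans_eq (WpM_singleton_singleton x x')
      _ ≤ min (lpNorm p ![d x x', d x₀ x₀]) (lpNorm p ![d x x₀, d x₀ x']) :=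
          matchCost_fin_two_le x x₀ x' x₀
      _ = min (d x x') (lpNorm p ![d x x₀, d x' x₀]) := by
          rw [hd.refl, lpNorm_pair_zero hp₀, hd.symm x₀]
  exact ⟨hWp, hWp ▸ min_le_left _ _⟩

end
end

section
/- For any pointed extended pseudometric space (X, d, x₀) and 1 ≤ p ≤ q ≤ ∞, the Wasserstein distances are monotone: W_q[d, x₀](α, β) ≤ W_p[d, x₀](α, β) for all persistence diagrams α, β ∈ D(X, x₀). -/
open scoped ENNReal BigOperators
noncomputable section

variable {X : Type*}

/-!
For a fixed matching the ℓ^q norm of the cost vector is at most its ℓ^p norm when `p ≤ q`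
(the finite-sum case of `ENNReal.rpow_add_rpow_le`, by induction on the number of terms), and
`W_p` is an infimum of such norms over the same matchings and representatives for every `p`.
-/

lemma sum_rpow_rpow_one_div_le_of_le {ι : Type*} (v : ι → ℝ≥0∞) {p q : ℝ}
    (hp : 0 < p) (hpq : p ≤ q) (s : Finset ι) :
    (∑ i ∈ s, v i ^ q) ^ (1 / q) ≤ (∑ i ∈ s, v i ^ p) ^ (1 / p) := by
  classical
  have hq : 0 < q := hp.trans_le hpq
  induction s using Finset.induction with
  | empty => simp [ENNReal.zero_rpow_of_pos, hp, hq]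
  | @insert a s ha ih =>
    rw [Finset.sum_insert ha, Finset.sum_insert ha]
    set B : ℝ≥0∞ := (∑ i ∈ s, v i ^ q) ^ (1 / q) with hB
    have hBq : B ^ q = ∑ i ∈ s, v i ^ q := by
      rw [hB, one_div, ENNReal.rpow_inv_rpow hq.ne']
    have hBp : B ^ p ≤ ∑ i ∈ s, v i ^ p :=
      calc B ^ p ≤ ((∑ i ∈ s, v i ^ p) ^ (1 / p)) ^ p := ENNReal.rpow_le_rpow ih hp.le
        _ = ∑ i ∈ s, v i ^ p := by rw [one_div, ENNReal.rpow_inv_rpow hp.ne']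
    calc (v a ^ q + ∑ i ∈ s, v i ^ q) ^ (1 / q) = (v a ^ q + B ^ q) ^ (1 / q) := by rw [hBq]
      _ ≤ (v a ^ p + B ^ p) ^ (1 / p) := ENNReal.rpow_add_rpow_le (v a) B hp hpq
      _ ≤ (v a ^ p + ∑ i ∈ s, v i ^ p) ^ (1 / p) := by gcongr

lemma lpNorm_antitone {n : ℕ} (v : Fin n → ℝ≥0∞) {p q : ℝ≥0∞}
    (hp : p ≠ 0) (hpq : p ≤ q) : lpNorm q v ≤ lpNorm p v := by
  rcases eq_or_ne p ∞ with rfl | hpi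
  · simp [lpNorm, top_le_iff.mp hpq]
  have hp0 : 0 < p.toReal := ENNReal.toReal_pos hp hpi
  rw [lpNorm, lpNorm, if_neg hpi]
  split_ifs with hqi
  · refine iSup_le fun i => ?_
    calc v i = (v i ^ p.toReal) ^ (1 / p.toReal) := by
          rw [one_div, ENNReal.rpow_rpow_inv hp0.ne']
      _ ≤ (∑ j, v j ^ p.toReal) ^ (1 / p.toReal) := by
          gcongr
          exact Finset.single_le_sum (f := fun j => v j ^ p.toReal) (fun _ _ => zero_le)
            (Finset.mem_univ i)
  · exact sum_rpow_rpow_one_div_le_of_le v hp0 ((ENNReal.toReal_le_toReal hpi hqi).mpr hpq) _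

lemma matchCost_antitone (d : X → X → ℝ≥0∞) {p q : ℝ≥0∞} (hp : p ≠ 0) (hpq : p ≤ q)
    {r : ℕ} (x y : Fin r → X) : matchCost d q x y ≤ matchCost d p x y :=
  iInf_mono fun _ => lpNorm_antitone _ hp hpq

theorem wasserstein_antitone_general (d : X → X → ℝ≥0∞) (x₀ : X)
    (p q : ℝ≥0∞) (hp : 1 ≤ p) (hpq : p ≤ q) (α β : Diagram X x₀) :
    Wp d x₀ q α β ≤ Wp d x₀ p α β :=
  iInf_mono fun _ => iInf_mono fun _ => iInf_mono fun _ => iInf_mono fun _ =>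
    matchCost_antitone d (one_pos.trans_le hp).ne' hpq _ _

/-- The Wasserstein distances are antitone in `p`: for `1 ≤ p ≤ q ≤ ∞`, `W_q ≤ W_p`. -/
theorem wasserstein_antitone (d : X → X → ℝ≥0∞) (hd : IsEPMetric d) (x₀ : X)
    (p q : ℝ≥0∞) (hp : 1 ≤ p) (hpq : p ≤ q) (α β : Diagram X x₀) :
    Wp d x₀ q α β ≤ Wp d x₀ p α β :=
  wasserstein_antitone_general d x₀ p q hp hpq α β
end
end

section
/- Kantorovich-Rubinstein inequality for persistence diagrams: let (X, d, x₀) be a pointed extended pseudometric space and α = a₁+⋯+a_n, β = b₁+⋯+b_m in D(X, x₀). Then for every 1-Lipschitz function k : X → ℝ with k(x₀) = 0, one has Σᵢ k(aᵢ) − Σⱼ k(bⱼ) ≤ W₁[d, x₀](α, β). -/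
open scoped ENNReal BigOperators
noncomputable section

variable {X : Type*}

/-!
Since `k x₀ = 0`, the sum `Σ k` over a formal sum is unchanged by adding copies of the basepoint,
so it is well defined on diagrams and unchanged by padding. For padded tuples `x`, `y` and any
matching `σ`, the difference of the sums is then `Σᵢ (k (x i) - k (y (σ i))) ≤ Σᵢ d (x i) (y (σ i))`
by the Lipschitz bound, and the right-hand side is the `ℓ¹` cost of `σ`.
-/

open Finset

lemma lpNorm_one {n : ℕ} (v : Fin n → ℝ≥0∞) : lpNorm 1 v = ∑ i, v i := by
  simp [lpNorm]

lemma sum_map_eq_of_diagCon_mk'_eq {M : Type*} [AddCommMonoid M] {x₀ : X} {k : X → M}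
    (hk₀ : k x₀ = 0) {s t : Multiset X} (h : (diagCon x₀).mk' s = (diagCon x₀).mk' t) :
    (s.map k).sum = (t.map k).sum := by
  obtain ⟨a, b, hab⟩ := (AddCon.eq _).mp h
  simpa [Multiset.map_replicate, hk₀] using congrArg (fun m => (m.map k).sum) hab

lemma sum_padTo {M : Type*} [AddCommMonoid M] {x₀ : X} {k : X → M} (hk₀ : k x₀ = 0)
    {n r : ℕ} (x : Fin n → X) (hnr : n ≤ r) :
    ∑ i, k (padTo x₀ x r i) = ∑ i, k (x i) := by
  obtain ⟨m, rfl⟩ := Nat.exists_eq_add_of_le hnr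
  simp [Fin.sum_univ_add, padTo, hk₀]

lemma sum_mFun {M : Type*} [AddCommMonoid M] (k : X → M) (s : Multiset X) :
    ∑ i, k (mFun s i) = (s.map k).sum := by
  conv_rhs => rw [← Multiset.coe_toList s]
  simp [mFun]

lemma ofReal_sum_sub_sum_le_matchCost {d : X → X → ℝ≥0∞} {k : X → ℝ}
    (hkLip : ∀ x y : X, ENNReal.ofReal |k x - k y| ≤ d x y) {r : ℕ} (x y : Fin r → X) :
    ENNReal.ofReal (∑ i, k (x i) - ∑ i, k (y i)) ≤ matchCost d 1 x y := by
  refine le_iInf fun σ => ?_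
  calc ENNReal.ofReal (∑ i, k (x i) - ∑ i, k (y i))
      = ENNReal.ofReal (∑ i, (k (x i) - k (y (σ i)))) := by
        rw [sum_sub_distrib, Equiv.sum_comp σ (fun i => k (y i))]
    _ ≤ ∑ i, ENNReal.ofReal (k (x i) - k (y (σ i))) :=
        le_sum_of_subadditive _ ENNReal.ofReal_zero.le (fun _ _ => ENNReal.ofReal_add_le) _ _
    _ ≤ ∑ i, d (x i) (y (σ i)) :=
        sum_le_sum fun i _ => (ENNReal.ofReal_le_ofReal (le_abs_self _)).trans (hkLip _ _)
    _ = lpNorm 1 (fun i => d (x i) (y (σ i))) := (lpNorm_one _).symm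

lemma ofReal_sum_sub_sum_le_WpM {d : X → X → ℝ≥0∞} {x₀ : X} {k : X → ℝ} (hk₀ : k x₀ = 0)
    (hkLip : ∀ x y : X, ENNReal.ofReal |k x - k y| ≤ d x y) (s t : Multiset X) :
    ENNReal.ofReal ((s.map k).sum - (t.map k).sum) ≤ WpM d x₀ 1 s t := by
  have hs := sum_padTo hk₀ (mFun s) (r := s.card + t.card) (by simp)
  have ht := sum_padTo hk₀ (mFun t) (r := s.card + t.card) (by simp)
  rw [← sum_mFun, ← sum_mFun, ← hs, ← ht]
  exact ofReal_sum_sub_sum_le_matchCost hkLip _ _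

theorem kantorovich_rubinstein_inequality_general (d : X → X → ℝ≥0∞) (x₀ : X)
    (k : X → ℝ) (hk₀ : k x₀ = 0)
    (hkLip : ∀ x y : X, ENNReal.ofReal |k x - k y| ≤ d x y)
    (s t : Multiset X) :
    ENNReal.ofReal ((s.map k).sum - (t.map k).sum)
      ≤ Wp d x₀ 1 ((diagCon x₀).mk' s) ((diagCon x₀).mk' t) := by
  refine le_iInf₂ fun s' t' => le_iInf₂ fun hs ht => ?_
  rw [← sum_map_eq_of_diagCon_mk'_eq hk₀ hs, ← sum_map_eq_of_diagCon_mk'_eq hk₀ ht]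
  exact ofReal_sum_sub_sum_le_WpM hk₀ hkLip s' t'

/-- Kantorovich–Rubinstein inequality for persistence diagrams: for every 1-Lipschitz
`k : X → ℝ` vanishing at the basepoint, `Σᵢ k(aᵢ) − Σⱼ k(bⱼ) ≤ W₁(α, β)`. -/
theorem kantorovich_rubinstein_inequality (d : X → X → ℝ≥0∞) (hd : IsEPMetric d) (x₀ : X)
    (k : X → ℝ) (hk₀ : k x₀ = 0)
    (hkLip : ∀ x y : X, ENNReal.ofReal |k x - k y| ≤ d x y)
    (s t : Multiset X) :
    ENNReal.ofReal ((s.map k).sum - (t.map k).sum)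
      ≤ Wp d x₀ 1 ((diagCon x₀).mk' s) ((diagCon x₀).mk' t) :=
  kantorovich_rubinstein_inequality_general d x₀ k hk₀ hkLip s t

end
end
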